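/- Let R be a Hermite ring. Then R is an elementary divisor ring if and only if for every a ∈ R the quotient ring R/(a) is a Π₂ ring, i.e., every unimodular 2×2 matrix over R/(a) with determinant 0 is extendable. -/

import Mathlib

/-!
For `det A = 0`, bordering `A` shows that it is extendable iff it represents `1`, i.e.
`x ⬝ᵥ A *ᵥ y = 1` for some vectors `x`, `y`. Quotients of an elementary divisor ring are elementary divisor rings, and a
unimodular matrix equivalent to `diag(d₁, d₂)` with `d₁ ∣ d₂` has `d₁` a unit, hence represents `1`.

Conversely, in a Hermite ring every matrix is `d • A₀` with `A₀` unimodular. The Π₂ property of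
`R/(det A₀)` gives `x ⬝ᵥ A₀ *ᵥ y ≡ 1 [mod det A₀]`; the Hermite property turns this into an exact
`x ⬝ᵥ A₀ *ᵥ y = 1`, and any matrix representing `1` is equivalent to `diag(1, det A₀)`.
-/

/-- A 2×2 matrix over a commutative ring is *unimodular* if the ideal generated by
its entries is the whole ring, i.e. some linear combination of its entries is 1. -/
def MatUnimodular {R : Type*} [CommRing R] (A : Matrix (Fin 2) (Fin 2) R) : Prop :=
  ∃ p q r s : R, p * A 0 0 + q * A 0 1 + r * A 1 0 + s * A 1 1 = 1

/-- A 2×2 matrix `A` is *extendable* if there is a 3×3 matrix of determinant 1 whose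
upper-left 2×2 block is `A`. -/
def Extendable {R : Type*} [CommRing R] (A : Matrix (Fin 2) (Fin 2) R) : Prop :=
  ∃ B : Matrix (Fin 3) (Fin 3) R, B.det = 1 ∧
    ∀ i j : Fin 2, B i.castSucc j.castSucc = A i j

/-- A 2×2 matrix `A` is *simply extendable* if there is a 3×3 matrix of determinant 1
whose upper-left 2×2 block is `A` and whose (3,3) entry is 0. -/
def SimplyExtendable {R : Type*} [CommRing R] (A : Matrix (Fin 2) (Fin 2) R) : Prop :=
  ∃ B : Matrix (Fin 3) (Fin 3) R, B.det = 1 ∧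
    (∀ i j : Fin 2, B i.castSucc j.castSucc = A i j) ∧ B 2 2 = 0

/-- A 2×2 matrix is *non-full* if it is a product of a 2×1 matrix and a 1×2 matrix. -/
def NonFull {R : Type*} [CommRing R] (A : Matrix (Fin 2) (Fin 2) R) : Prop :=
  ∃ l m n q : R, A 0 0 = l * n ∧ A 0 1 = l * q ∧ A 1 0 = m * n ∧ A 1 1 = m * q

/-- `R` is a *Hermite ring* (in the sense of Kaplansky) if every pair `(a, b)` can be
written as `a = r*s`, `b = r*t` with `(s, t)` unimodular. -/
def IsHermiteRing (R : Type*) [CommRing R] : Prop :=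
  ∀ a b : R, ∃ r s t : R, a = r * s ∧ b = r * t ∧ ∃ x y : R, s * x + t * y = 1

/-- `R` is an *elementary divisor ring* if every 2×2 matrix over `R` admits diagonal
reduction `M * A * N = diag(d₁, d₂)` with `M`, `N` invertible and `d₁ ∣ d₂`. -/
def IsEDR (R : Type*) [CommRing R] : Prop :=
  ∀ A : Matrix (Fin 2) (Fin 2) R, ∃ M N : Matrix (Fin 2) (Fin 2) R,
    IsUnit M.det ∧ IsUnit N.det ∧ ∃ d₁ d₂ : R, d₁ ∣ d₂ ∧
      M * A * N = Matrix.of ![![d₁, 0], ![0, d₂]]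

open Matrix

section

variable {R S : Type*} [CommRing R] [CommRing S]

/-- With corner entry `0` the bordered determinant has no `det A` term; the border is chosen so
that what remains is `x ⬝ᵥ A *ᵥ y`. -/
theorem extendable_of_dotProduct_mulVec_eq_one {A : Matrix (Fin 2) (Fin 2) R} {x y : Fin 2 → R}
    (h : x ⬝ᵥ A *ᵥ y = 1) : Extendable A := by
  refine ⟨!![A 0 0, A 0 1, x 1; A 1 0, A 1 1, -x 0; -y 1, y 0, 0], ?_, ?_⟩
  · simp only [dotProduct, mulVec, Fin.sum_univ_two] at h
    rw [det_fin_three]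
    simp only [of_apply, cons_val', cons_val_zero, cons_val_one, cons_val_two, empty_val',
      cons_val_fin_one, head_cons, tail_cons, head_fin_const]
    linear_combination h
  · intro i j
    fin_cases i <;> fin_cases j <;> rfl

theorem Extendable.exists_dotProduct_mulVec_eq_one {A : Matrix (Fin 2) (Fin 2) R}
    (hA : Extendable A) (hdet : A.det = 0) : ∃ x y : Fin 2 → R, x ⬝ᵥ A *ᵥ y = 1 := by
  obtain ⟨B, hB, hBA⟩ := hA
  have h00 : B 0 0 = A 0 0 := hBA 0 0
  have h01 : B 0 1 = A 0 1 := hBA 0 1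
  have h10 : B 1 0 = A 1 0 := hBA 1 0
  have h11 : B 1 1 = A 1 1 := hBA 1 1
  rw [det_fin_three, h00, h01, h10, h11] at hB
  rw [det_fin_two] at hdet
  refine ⟨![-B 1 2, B 0 2], ![B 2 1, -B 2 0], ?_⟩
  simp only [dotProduct, mulVec, Fin.sum_univ_two, cons_val_zero, cons_val_one]
  linear_combination hB - B 2 2 * hdet

theorem matUnimodular_iff_exists_trace_mul_eq_one {A : Matrix (Fin 2) (Fin 2) R} :
    MatUnimodular A ↔ ∃ C : Matrix (Fin 2) (Fin 2) R, (C * A).trace = 1 := by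
  simp only [trace_fin_two, mul_apply, Fin.sum_univ_two]
  constructor
  · rintro ⟨p, q, r, s, h⟩
    exact ⟨!![p, r; q, s], by simpa [add_comm, add_left_comm, add_assoc] using h⟩
  · rintro ⟨C, h⟩
    exact ⟨C 0 0, C 1 0, C 0 1, C 1 1, by linear_combination h⟩

theorem MatUnimodular.mul_mul {A M N : Matrix (Fin 2) (Fin 2) R} (hA : MatUnimodular A)
    (hM : IsUnit M.det) (hN : IsUnit N.det) : MatUnimodular (M * A * N) := by
  obtain ⟨C, hC⟩ := matUnimodular_iff_exists_trace_mul_eq_one.mp hA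
  refine matUnimodular_iff_exists_trace_mul_eq_one.mpr ⟨N⁻¹ * C * M⁻¹, ?_⟩
  calc (N⁻¹ * C * M⁻¹ * (M * A * N)).trace = (N⁻¹ * (C * A) * N).trace := by
        simp only [Matrix.mul_assoc, nonsing_inv_mul_cancel_left _ _ hM]
    _ = (C * A).trace := by rw [trace_mul_cycle, mul_nonsing_inv _ hN, Matrix.one_mul]
    _ = 1 := hC

theorem MatUnimodular.map {A : Matrix (Fin 2) (Fin 2) R} (hA : MatUnimodular A)
    (f : R →+* S) : MatUnimodular (A.map f) := by
  obtain ⟨p, q, r, s, h⟩ := hA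
  exact ⟨f p, f q, f r, f s, by simpa using congrArg f h⟩

theorem IsEDR.of_surjective (hR : IsEDR R) (f : R →+* S)
    (hf : Function.Surjective f) : IsEDR S := by
  intro A
  obtain ⟨M, N, hM, hN, d₁, d₂, hd, hMN⟩ := hR (of fun i j => Function.surjInv hf (A i j))
  refine ⟨M.map f, N.map f, ?_, ?_, f d₁, f d₂, map_dvd f hd, ?_⟩
  · simpa [RingHom.map_det] using hM.map f
  · simpa [RingHom.map_det] using hN.map f
  · have hA : (of fun i j => Function.surjInv hf (A i j)).map f = A := by
      ext i j
      exact Function.surjInv_eq hf _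
    rw [← hA, ← Matrix.map_mul, ← Matrix.map_mul, hMN]
    ext i j
    fin_cases i <;> fin_cases j <;> simp

/-- In a diagonal reduction `diag(d₁, d₂)` of a unimodular matrix, `d₁` is a unit. -/
theorem IsEDR.exists_dotProduct_mulVec_eq_one (hR : IsEDR R)
    {A : Matrix (Fin 2) (Fin 2) R} (hA : MatUnimodular A) :
    ∃ x y : Fin 2 → R, x ⬝ᵥ A *ᵥ y = 1 := by
  obtain ⟨M, N, hM, hN, d₁, _, ⟨e, rfl⟩, hMN⟩ := hR A
  obtain ⟨p, q, r, s, h⟩ := hMN ▸ hA.mul_mul hM hN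
  refine ⟨![p + s * e, 0] ᵥ* M, N *ᵥ ![1, 0], ?_⟩
  rw [dotProduct_mulVec, vecMul_vecMul, ← dotProduct_mulVec, mulVec_mulVec, hMN]
  simp only [dotProduct, mulVec, Fin.sum_univ_two, of_apply, cons_val', cons_val_zero,
    cons_val_fin_one, cons_val_one, mul_zero, add_zero, mul_one] at h ⊢
  linear_combination h

/-- `M` has rows `x` and a rotation of `A *ᵥ y`, `N` has columns `y` and a rotation of
`x ᵥ* A`; both determinants equal `x ⬝ᵥ A *ᵥ y`. -/
theorem exists_mul_mul_eq_diag_of_dotProduct_mulVec_eq_one {A : Matrix (Fin 2) (Fin 2) R}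
    {x y : Fin 2 → R} (h : x ⬝ᵥ A *ᵥ y = 1) :
    ∃ M N : Matrix (Fin 2) (Fin 2) R, M.det = 1 ∧ N.det = 1 ∧
      M * A * N = !![1, 0; 0, A.det] := by
  refine ⟨!![x 0, x 1; -(A *ᵥ y) 1, (A *ᵥ y) 0], !![y 0, -(x ᵥ* A) 1; y 1, (x ᵥ* A) 0],
    ?_, ?_, ?_⟩
  all_goals
    simp only [dotProduct, mulVec, vecMul, Fin.sum_univ_two] at h ⊢
  · rw [det_fin_two_of]; linear_combination h
  · rw [det_fin_two_of]; linear_combination h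
  · rw [det_fin_two]
    ext i j
    fin_cases i <;> fin_cases j <;>
      simp only [Fin.zero_eta, Fin.mk_one, Fin.isValue, cons_mul, empty_mul,
        Equiv.symm_apply_apply, mul_apply, of_apply, cons_val', vecMul, dotProduct,
        Fin.sum_univ_two, cons_val_zero, cons_val_one, cons_val_fin_one]
    · linear_combination h
    · ring
    · ring
    · linear_combination (A 0 0 * A 1 1 - A 0 1 * A 1 0) * h

theorem IsHermiteRing.exists_eq_smul_matUnimodular (hR : IsHermiteRing R)
    (A : Matrix (Fin 2) (Fin 2) R) : ∃ (d : R) (A₀ : Matrix (Fin 2) (Fin 2) R),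
      A = d • A₀ ∧ MatUnimodular A₀ := by
  obtain ⟨r₁, s₁, t₁, h00, h01, u₁, v₁, h₁⟩ := hR (A 0 0) (A 0 1)
  obtain ⟨r₂, s₂, t₂, hr₁, h10, u₂, v₂, h₂⟩ := hR r₁ (A 1 0)
  obtain ⟨d, s₃, t₃, hr₂, h11, u₃, v₃, h₃⟩ := hR r₂ (A 1 1)
  refine ⟨d, !![s₃ * s₂ * s₁, s₃ * s₂ * t₁; s₃ * t₂, t₃], ?_,
    u₃ * u₂ * u₁, u₃ * u₂ * v₁, u₃ * v₂, v₃, ?_⟩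
  · ext i j
    fin_cases i <;> fin_cases j <;>
      simp only [Fin.zero_eta, Fin.mk_one, Fin.isValue, h00, h01, h10, h11, hr₁, hr₂,
        Matrix.smul_apply, of_apply, cons_val', cons_val_zero, cons_val_one, cons_val_fin_one,
        smul_eq_mul] <;> ring
  · simp only [of_apply, cons_val', cons_val_zero, cons_val_one, cons_val_fin_one]
    linear_combination (u₃ * u₂ * s₃ * s₂) * h₁ + (u₃ * s₃) * h₂ + h₃

/-- Write `x = e • (s, t)` with `s * u + t * v = 1`. Since `(s, t) ᵥ* A * adj A = det A • (s, t)`,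
subtracting `c • adj A *ᵥ (u, v)` from `e • y` cancels the term `c * det A`. -/
theorem IsHermiteRing.exists_dotProduct_mulVec_eq_one (hR : IsHermiteRing R)
    {A : Matrix (Fin 2) (Fin 2) R} {x y : Fin 2 → R} {c : R}
    (h : x ⬝ᵥ A *ᵥ y = 1 + c * A.det) : ∃ x' y' : Fin 2 → R, x' ⬝ᵥ A *ᵥ y' = 1 := by
  obtain ⟨e, s, t, hx₀, hx₁, u, v, huv⟩ := hR (x 0) (x 1)
  refine ⟨![s, t], e • y - c • (A.adjugate *ᵥ ![u, v]), ?_⟩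
  simp only [dotProduct, mulVec, det_fin_two, Fin.sum_univ_two, hx₀, hx₁] at h
  simp only [dotProduct, mulVec, adjugate_fin_two, Fin.sum_univ_two, Pi.sub_apply,
    Pi.smul_apply, smul_eq_mul, of_apply, cons_val', cons_val_zero, cons_val_one,
    cons_val_fin_one]
  linear_combination h - c * (A 0 0 * A 1 1 - A 0 1 * A 1 0) * huv

theorem exists_dotProduct_mulVec_eq_one_add_mul_of_quotient {m n : Type*} [Fintype m]
    [Fintype n] {a : R} {A : Matrix m n R} {x : m → R ⧸ Ideal.span {a}}
    {y : n → R ⧸ Ideal.span {a}} (h : x ⬝ᵥ A.map (Ideal.Quotient.mk _) *ᵥ y = 1) :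
    ∃ (x' : m → R) (y' : n → R) (c : R), x' ⬝ᵥ A *ᵥ y' = 1 + c * a := by
  choose x' hx' using fun i => Ideal.Quotient.mk_surjective (x i)
  choose y' hy' using fun j => Ideal.Quotient.mk_surjective (y j)
  have hmk : Ideal.Quotient.mk (Ideal.span {a}) (x' ⬝ᵥ A *ᵥ y') = 1 := by
    simpa [dotProduct, mulVec, map_sum, hx', hy'] using h
  rw [← map_one (Ideal.Quotient.mk _), Ideal.Quotient.eq, Ideal.mem_span_singleton'] at hmk
  obtain ⟨c, hc⟩ := hmk
  exact ⟨x', y', c, by rw [hc]; ring⟩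

theorem IsHermiteRing.isEDR (hR : IsHermiteRing R)
    (hR₂ : ∀ a : R, ∀ A : Matrix (Fin 2) (Fin 2) (R ⧸ Ideal.span {a}),
      MatUnimodular A → A.det = 0 → Extendable A) : IsEDR R := by
  intro A
  obtain ⟨d, A₀, rfl, hA₀⟩ := hR.exists_eq_smul_matUnimodular A
  let f := Ideal.Quotient.mk (Ideal.span {A₀.det})
  have hdet : (A₀.map f).det = 0 := by
    rw [← RingHom.mapMatrix_apply, ← RingHom.map_det, Ideal.Quotient.eq_zero_iff_mem]
    exact Ideal.mem_span_singleton_self _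
  obtain ⟨x, y, hxy⟩ := (hR₂ _ _ (hA₀.map f) hdet).exists_dotProduct_mulVec_eq_one hdet
  obtain ⟨x, y, c, hxy⟩ := exists_dotProduct_mulVec_eq_one_add_mul_of_quotient hxy
  obtain ⟨x, y, hxy⟩ := hR.exists_dotProduct_mulVec_eq_one hxy
  obtain ⟨M, N, hM, hN, hMN⟩ := exists_mul_mul_eq_diag_of_dotProduct_mulVec_eq_one hxy
  refine ⟨M, N, hM ▸ isUnit_one, hN ▸ isUnit_one, d, d * A₀.det, dvd_mul_right _ _, ?_⟩
  rw [Matrix.mul_smul, Matrix.smul_mul, hMN]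
  ext i j
  fin_cases i <;> fin_cases j <;> simp

end

/-- A Hermite ring is an elementary divisor ring iff `R/(a)` is a Π₂ ring for
every `a ∈ R`. -/
theorem hermite_edr_iff_quotients_pi2 (R : Type*) [CommRing R] (hR : IsHermiteRing R) :
    IsEDR R ↔ ∀ a : R, ∀ A : Matrix (Fin 2) (Fin 2) (R ⧸ Ideal.span {a}),
      MatUnimodular A → A.det = 0 → Extendable A := by
  refine ⟨fun hE a A hA _ => ?_, hR.isEDR⟩
  obtain ⟨x, y, hxy⟩ :=
    (hE.of_surjective _ Ideal.Quotient.mk_surjective).exists_dotProduct_mulVec_eq_one hA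
  exact extendable_of_dotProduct_mulVec_eq_one hxy
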